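/- arXiv:2503.08922 — 5 statements merged into one kernel-verified Lean document; each statement's English description precedes it below -/
import Mathlib

section
/- Let s₀ ∈ ℝ, ε > 0 and s ∈ ℝ. Let (I_i)_{i∈B} be an infinite family of bars I_i = (a_i, b_i] (with a_i ∈ ℝ, b_i ∈ ℝ ∪ {+∞}) such that s₀ ≤ a_i < s and b_i − a_i > ε for every i ∈ B. Then there exist real numbers t' < t such that the set {i ∈ B : a_i < t' and t ≤ b_i} (i.e., the set of indices i with [t', t] ⊆ I_i) is infinite. -/
/-!
Cut the window `[s₀, s)` containing the left endpoints into finitely many pieces of length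
`ε / 2`; by pigeonhole infinitely many left endpoints fall into one piece `[c, c + ε / 2)`.
Each of these bars starts before `t' := c + ε / 2` and, being longer than `ε`, reaches beyond
`t := c + ε`.
-/

open Set

theorem exists_infinite_setOf_mem_Ico {B : Type*} [Infinite B] {f : B → ℝ} {x y δ : ℝ}
    (hδ : 0 < δ) (hx : ∀ i, x ≤ f i) (hy : ∀ i, f i < y) :
    ∃ c : ℝ, {i | f i ∈ Ico c (c + δ)}.Infinite := by
  have hbox (i : B) : ⌊f i / δ⌋ ∈ Icc ⌊x / δ⌋ ⌊y / δ⌋ :=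
    ⟨Int.floor_mono (by gcongr; exact hx i), Int.floor_mono (by gcongr; exact (hy i).le)⟩
  obtain ⟨k, hk⟩ :=
    Finite.exists_infinite_fiber fun i ↦ (⟨_, hbox i⟩ : Icc ⌊x / δ⌋ ⌊y / δ⌋)
  refine ⟨k * δ, (infinite_coe_iff.mp hk).mono fun i hi ↦ ?_⟩
  have hfloor : ⌊f i / δ⌋ = k := congrArg Subtype.val hi
  obtain ⟨hlo, hhi⟩ := Int.floor_eq_iff.mp hfloor
  constructor
  · exact (le_div_iff₀ hδ).mp hlo
  · have := (div_lt_iff₀ hδ).mp hhi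
    linarith

theorem EReal.coe_add_lt_of_lt_sub {a ε : ℝ} {b : EReal} (h : (ε : EReal) < b - a) :
    ((a + ε : ℝ) : EReal) < b := by
  rw [EReal.lt_sub_iff_add_lt (.inl (EReal.coe_ne_bot _)) (.inl (EReal.coe_ne_top _))] at h
  rwa [add_comm, EReal.coe_add]

/-- Given an infinite family of bars `(a i, b i]` (with `b i ∈ ℝ ∪ {+∞}`)
all beginning in `[s₀, s)` and all of length greater than `ε`, there exist real numbers
`t' < t` such that infinitely many of the bars contain the segment `[t', t]`,
i.e. `a i < t'` and `t ≤ b i` for infinitely many `i`. -/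
theorem stmt_0 {B : Type*} [Infinite B] (s₀ ε s : ℝ) (hε : 0 < ε)
    (a : B → ℝ) (b : B → EReal)
    (hlb : ∀ i, s₀ ≤ a i) (hub : ∀ i, a i < s)
    (hlen : ∀ i, (ε : EReal) < b i - (a i : EReal)) :
    ∃ t' t : ℝ, t' < t ∧ {i : B | a i < t' ∧ (t : EReal) ≤ b i}.Infinite := by
  obtain ⟨c, hc⟩ := exists_infinite_setOf_mem_Ico (half_pos hε) hlb hub
  refine ⟨c + ε / 2, c + ε, by linarith, hc.mono fun i hi ↦ ⟨hi.2, ?_⟩⟩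
  calc ((c + ε : ℝ) : EReal)
      ≤ ((a i + ε : ℝ) : EReal) := EReal.coe_le_coe_iff.mpr (by linarith [hi.1])
    _ ≤ b i := (EReal.coe_add_lt_of_lt_sub (hlen i)).le
end

section
/- Let B be an index type and a : B → ℝ, b : B → ℝ ∪ {+∞} satisfy a_i < b_i for all i ∈ B, and suppose there is s₀ ∈ ℝ with a_i ≥ s₀ for all i. Assume that for all real numbers t' < t the set {i ∈ B : a_i < t' and t ≤ b_i} is finite (q-tameness in the interval-decomposed model, since this set's cardinality is the rank of the structure map π_{t',t}). Then for every ε > 0 and every s ∈ ℝ, the set {i ∈ B : a_i < s and b_i − a_i > ε} is finite; that is, the number b_ε(s) of bars of length greater than ε beginning below s is finite. -/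
/-!
Fix `δ = ε / 2`. A bar of length `> ε` starting in `[s - δ, s)` contains the segment
`[s, s + δ]`, so these bars form one of the finite sets of the tameness hypothesis, while the
bars starting below `s - δ` are handled by the same statement at `s - δ`. Since all bars start
above `s₀`, finitely many such steps of size `δ` reach below `s₀`, where there are no bars.
-/

namespace Barcode

variable {B : Type*} (a : B → ℝ) (b : B → EReal)

/-- Its cardinality is the paper's `b_ε(s)`. -/
def longBarsBelow (ε s : ℝ) : Set B :=
  {i | a i < s ∧ (ε : EReal) < b i - (a i : EReal)}

theorem longBarsBelow_subset_union (ε δ s : ℝ) :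
    longBarsBelow a b ε s ⊆
      longBarsBelow a b ε (s - δ) ∪ {i | a i < s ∧ ((s - δ + ε : ℝ) : EReal) ≤ b i} := by
  rintro i ⟨his, hlong⟩
  by_cases hstart : a i < s - δ
  · exact Or.inl ⟨hstart, hlong⟩
  · refine Or.inr ⟨his, le_of_lt ?_⟩
    calc ((s - δ + ε : ℝ) : EReal) ≤ ((a i + ε : ℝ) : EReal) := by
          exact_mod_cast (by linarith : s - δ + ε ≤ a i + ε)
      _ = (ε : EReal) + a i := by rw [EReal.coe_add, add_comm]
      _ < b i := EReal.add_lt_of_lt_sub hlong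

theorem longBarsBelow_eq_empty {s₀ : ℝ} (hlb : ∀ i, s₀ ≤ a i) (ε : ℝ) {s : ℝ} (hs : s ≤ s₀) :
    longBarsBelow a b ε s = ∅ :=
  Set.eq_empty_of_forall_notMem fun i hi => (hlb i).not_gt (hi.1.trans_le hs)

theorem longBarsBelow_finite {s₀ : ℝ} (hlb : ∀ i, s₀ ≤ a i)
    (htame : ∀ t' t : ℝ, t' < t → {i : B | a i < t' ∧ (t : EReal) ≤ b i}.Finite)
    {ε : ℝ} (hε : 0 < ε) (s : ℝ) : (longBarsBelow a b ε s).Finite := by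
  obtain ⟨n, hn⟩ := exists_nat_ge ((s - s₀) / (ε / 2))
  have hs : s ≤ s₀ + n * (ε / 2) := by
    have := (div_le_iff₀ (half_pos hε)).mp hn
    linarith
  clear hn
  induction n generalizing s with
  | zero => simp [longBarsBelow_eq_empty a b hlb ε (by simpa using hs)]
  | succ n ih =>
    have hprev : (longBarsBelow a b ε (s - ε / 2)).Finite := by
      refine ih _ ?_
      push_cast at hs
      linarith
    exact (hprev.union (htame _ _ (by linarith))).subset
      (longBarsBelow_subset_union a b ε (ε / 2) s)

end Barcode

theorem stmt_1_general {B : Type*} (a : B → ℝ) (b : B → EReal)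
    (s₀ : ℝ) (hlb : ∀ i, s₀ ≤ a i)
    (htame : ∀ t' t : ℝ, t' < t → {i : B | a i < t' ∧ (t : EReal) ≤ b i}.Finite) :
    ∀ ε > (0 : ℝ), ∀ s : ℝ,
      {i : B | a i < s ∧ (ε : EReal) < b i - (a i : EReal)}.Finite :=
  fun _ hε => Barcode.longBarsBelow_finite a b hlb htame hε

/-- For a family of bars `(a i, b i]` with starting points bounded below,
if for all `t' < t` the set of bars containing the segment `[t', t]` (whose cardinality
is the rank of the structure map `π_{t',t}` of the interval-decomposed persistence
module, so this is q-tameness) is finite, then for every `ε > 0` and `s ∈ ℝ` the set of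
bars of length greater than `ε` beginning below `s` is finite. -/
theorem stmt_1 {B : Type*} (a : B → ℝ) (b : B → EReal)
    (hab : ∀ i, (a i : EReal) < b i)
    (s₀ : ℝ) (hlb : ∀ i, s₀ ≤ a i)
    (htame : ∀ t' t : ℝ, t' < t → {i : B | a i < t' ∧ (t : EReal) ≤ b i}.Finite) :
    ∀ ε > (0 : ℝ), ∀ s : ℝ,
      {i : B | a i < s ∧ (ε : EReal) < b i - (a i : EReal)}.Finite :=
  stmt_1_general a b s₀ hlb htame
end

section
/- Let B be an index type and a : B → ℝ, b : B → ℝ ∪ {+∞} with a_i < b_i for all i, and suppose that for every ε > 0 and s ∈ ℝ the set N(ε, s) = {i ∈ B : a_i < s and b_i − a_i > ε} is finite. Then the count b_ε(s) = #N(ε, s) is right semi-continuous in ε and left semi-continuous in s: for every ε > 0 and s ∈ ℝ there exists δ > 0 such that N(ε', s') = N(ε, s) (and in particular b_{ε'}(s') = b_ε(s)) whenever ε ≤ ε' < ε + δ and s − δ < s' ≤ s. -/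
/-!
Only the finitely many bars in `N(ε, s)` matter: each of them starts strictly before `s` and is
strictly longer than `ε`, and both strict inequalities survive a small perturbation of `(ε, s)`.
Since `N(ε', s')` shrinks as `ε'` grows and `s'` decreases, a single `δ` that works for all the
finitely many bars of `N(ε, s)` makes `N(ε', s') = N(ε, s)`.
-/

open Filter Topology

namespace Barcode

variable {B : Type*} (a : B → ℝ) (b : B → EReal)

/-- The paper's `N(ε, s)`, whose cardinality is `b_ε(s)`. -/
def longBars (ε s : ℝ) : Set B :=
  {i | a i < s ∧ (ε : EReal) < b i - (a i : EReal)}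

theorem longBars_anti {ε ε' s s' : ℝ} (hε : ε ≤ ε') (hs : s' ≤ s) :
    longBars a b ε' s' ⊆ longBars a b ε s :=
  fun _ ⟨hstart, hlength⟩ ↦
    ⟨hstart.trans_le hs, (EReal.coe_le_coe_iff.mpr hε).trans_lt hlength⟩

theorem eventually_mem_longBars {ε s : ℝ} {i : B} (hi : i ∈ longBars a b ε s) :
    ∀ᶠ p : ℝ × ℝ in 𝓝 (ε, s), i ∈ longBars a b p.1 p.2 := by
  have hlength : ∀ᶠ p : ℝ × ℝ in 𝓝 (ε, s), (p.1 : EReal) < b i - (a i : EReal) :=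
    (continuous_coe_real_ereal.comp continuous_fst).continuousAt.eventually_lt
      continuousAt_const hi.2
  have hstart : ∀ᶠ p : ℝ × ℝ in 𝓝 (ε, s), a i < p.2 :=
    continuousAt_const.eventually_lt continuous_snd.continuousAt hi.1
  exact hstart.and hlength

theorem eventually_longBars_subset {ε s : ℝ} (hfin : (longBars a b ε s).Finite) :
    ∀ᶠ p : ℝ × ℝ in 𝓝 (ε, s), longBars a b ε s ⊆ longBars a b p.1 p.2 :=
  (eventually_all_finite hfin).mpr fun _ hi ↦ eventually_mem_longBars a b hi

theorem exists_longBars_eq {ε s : ℝ} (hfin : (longBars a b ε s).Finite) :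
    ∃ δ > (0 : ℝ), ∀ ε' s' : ℝ, ε ≤ ε' → ε' < ε + δ → s - δ < s' → s' ≤ s →
      longBars a b ε' s' = longBars a b ε s := by
  obtain ⟨δ, hδ, hsub⟩ := Metric.eventually_nhds_iff.mp (eventually_longBars_subset a b hfin)
  refine ⟨δ, hδ, fun ε' s' hε hε' hs' hs ↦
    (longBars_anti a b hε hs).antisymm (hsub (y := (ε', s')) ?_)⟩
  rw [Prod.dist_eq, Real.dist_eq, Real.dist_eq, max_lt_iff, abs_lt, abs_lt]
  exact ⟨⟨by linarith, by linarith⟩, ⟨by linarith, by linarith⟩⟩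

end Barcode

open Barcode in
theorem stmt_3_general {B : Type*} (a : B → ℝ) (b : B → EReal)
    (hfin : ∀ ε > (0 : ℝ), ∀ s : ℝ,
      {i : B | a i < s ∧ (ε : EReal) < b i - (a i : EReal)}.Finite) :
    ∀ ε > (0 : ℝ), ∀ s : ℝ, ∃ δ > (0 : ℝ), ∀ ε' s' : ℝ,
      ε ≤ ε' → ε' < ε + δ → s - δ < s' → s' ≤ s →
      ({i : B | a i < s' ∧ (ε' : EReal) < b i - (a i : EReal)}
        = {i : B | a i < s ∧ (ε : EReal) < b i - (a i : EReal)} ∧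
      Nat.card ↥{i : B | a i < s' ∧ (ε' : EReal) < b i - (a i : EReal)}
        = Nat.card ↥{i : B | a i < s ∧ (ε : EReal) < b i - (a i : EReal)}) := by
  intro ε hε s
  obtain ⟨δ, hδ, hconst⟩ := exists_longBars_eq a b (hfin ε hε s)
  refine ⟨δ, hδ, fun ε' s' hε hε' hs' hs ↦ ?_⟩
  have heq : longBars a b ε' s' = longBars a b ε s := hconst ε' s' hε hε' hs' hs
  exact ⟨heq, congrArg (fun N : Set B ↦ Nat.card N) heq⟩

/-- If for every `ε > 0` and `s` the set
`N(ε, s) = {i | a i < s and b i − a i > ε}` of bars of length `> ε` beginning below `s`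
is finite, then the count `b_ε(s) = #N(ε, s)` is right semi-continuous in `ε` and left
semi-continuous in `s`: there is `δ > 0` with `N(ε', s') = N(ε, s)` (hence
`b_{ε'}(s') = b_ε(s)`) whenever `ε ≤ ε' < ε + δ` and `s − δ < s' ≤ s`. -/
theorem stmt_3 {B : Type*} (a : B → ℝ) (b : B → EReal)
    (hab : ∀ i, (a i : EReal) < b i)
    (hfin : ∀ ε > (0 : ℝ), ∀ s : ℝ,
      {i : B | a i < s ∧ (ε : EReal) < b i - (a i : EReal)}.Finite) :
    ∀ ε > (0 : ℝ), ∀ s : ℝ, ∃ δ > (0 : ℝ), ∀ ε' s' : ℝ,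
      ε ≤ ε' → ε' < ε + δ → s - δ < s' → s' ≤ s →
      ({i : B | a i < s' ∧ (ε' : EReal) < b i - (a i : EReal)}
        = {i : B | a i < s ∧ (ε : EReal) < b i - (a i : EReal)} ∧
      Nat.card ↥{i : B | a i < s' ∧ (ε' : EReal) < b i - (a i : EReal)}
        = Nat.card ↥{i : B | a i < s ∧ (ε : EReal) < b i - (a i : EReal)}) :=
  stmt_3_general a b hfin
end

section
/- Let W = W_f and W' = W_g be closed star-shaped domains in ℝ^{2n} determined by continuous functions f, g : S^{2n−1} → (0,∞), and suppose there exists a symplectomorphism F from int W onto int W'. Then for every λ > 1, λ is (W, W')-admissible and (W', W)-admissible. Consequently δ(W, W') = δ(W', W) = 0 and the symplectic Banach–Mazur distance satisfies d_{SBM}(W, W') = 0. -/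
open Pointwise

/-- `ℝ^{2n}` identified with `(Fin n → ℝ) × (Fin n → ℝ)`. -/
abbrev ESp (n : ℕ) := (Fin n → ℝ) × (Fin n → ℝ)

/-- The standard symplectic form on `ℝ^{2n} = (Fin n → ℝ) × (Fin n → ℝ)`:
`ω((u,v),(u',v')) = Σ_i (u_i v'_i − v_i u'_i)`. -/
noncomputable def stdSymp {n : ℕ} (z w : ESp n) : ℝ :=
  ∑ i, (z.1 i * w.2 i - z.2 i * w.1 i)

/-- The closed star-shaped domain `W_g = {0} ∪ {x ≠ 0 : ‖x‖ ≤ g(x/‖x‖)}` determined by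
a function `g` on the unit sphere. -/
def starDom {n : ℕ} (g : ESp n → ℝ) : Set (ESp n) :=
  {0} ∪ {x | x ≠ 0 ∧ ‖x‖ ≤ g (‖x‖⁻¹ • x)}

/-- The interior `int W_g = {0} ∪ {x ≠ 0 : ‖x‖ < g(x/‖x‖)}` of the closed star-shaped
domain determined by `g`. -/
def starDomInt {n : ℕ} (g : ESp n → ℝ) : Set (ESp n) :=
  {0} ∪ {x | x ≠ 0 ∧ ‖x‖ < g (‖x‖⁻¹ • x)}

/-- `F` is a symplectic map on `U`: it is smooth on `U` and its derivative preserves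
the standard symplectic form at every point of `U`. -/
def IsSympOn {n : ℕ} (F : ESp n → ESp n) (U : Set (ESp n)) : Prop :=
  ContDiffOn ℝ (⊤ : ℕ∞) F U ∧
  ∀ x ∈ U, ∀ ζ ζ' : ESp n,
    stdSymp (fderiv ℝ F x ζ) (fderiv ℝ F x ζ') = stdSymp ζ ζ'

/-- `F` is a symplectomorphism from `U` onto `U'` with inverse `G`: both `F` and `G`
are symplectic maps, `F` maps `U` into `U'`, `G` maps `U'` into `U`, and they are
mutually inverse. -/
def IsSymplectomorphism {n : ℕ} (F G : ESp n → ESp n) (U U' : Set (ESp n)) : Prop :=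
  IsSympOn F U ∧ IsSympOn G U' ∧ Set.MapsTo F U U' ∧ Set.MapsTo G U' U ∧
  (∀ x ∈ U, G (F x) = x) ∧ (∀ y ∈ U', F (G y) = y)

/-- `lam > 1` is `(W_f, W_g)`-admissible: there are a symplectic embedding `φ` of an
open neighborhood of `lam⁻¹ • W_f` into `int W_g` and a symplectic embedding `ψ` of an
open neighborhood of `W_g` into `lam • int W_f` such that `ψ ∘ φ` is isotopic to the
inclusion through symplectic embeddings of a fixed open neighborhood of `lam⁻¹ • W_f`
into `lam • int W_f` (unknottedness). -/
def SBMAdmissible {n : ℕ} (lam : ℝ) (f g : ESp n → ℝ) : Prop :=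
  1 < lam ∧
  ∃ (A B : Set (ESp n)) (φ ψ : ESp n → ESp n),
    IsOpen A ∧ lam⁻¹ • starDom f ⊆ A ∧
    IsSympOn φ A ∧ Set.InjOn φ A ∧ φ '' A ⊆ starDomInt g ∧
    IsOpen B ∧ starDom g ⊆ B ∧
    IsSympOn ψ B ∧ Set.InjOn ψ B ∧ ψ '' B ⊆ lam • starDomInt f ∧
    ∃ (A' : Set (ESp n)) (h : ℝ → ESp n → ESp n),
      IsOpen A' ∧ lam⁻¹ • starDom f ⊆ A' ∧
      ContDiffOn ℝ (⊤ : ℕ∞) (fun p : ℝ × ESp n => h p.1 p.2) (Set.Icc (0:ℝ) 1 ×ˢ A') ∧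
      (∀ t ∈ Set.Icc (0:ℝ) 1,
        IsSympOn (h t) A' ∧ Set.InjOn (h t) A' ∧ h t '' A' ⊆ lam • starDomInt f) ∧
      (∀ x ∈ A', h 0 x = x) ∧
      (∀ x ∈ lam⁻¹ • starDom f, h 1 x = ψ (φ x))

/-- `δ(W_f, W_g) = inf {ln lam : lam is (W_f, W_g)-admissible}`. -/
noncomputable def sbmDelta {n : ℕ} (f g : ESp n → ℝ) : ℝ :=
  sInf (Real.log '' {lam : ℝ | SBMAdmissible lam f g})

/-- The symplectic Banach–Mazur distance
`d_SBM(W_f, W_g) = max {δ(W_f, W_g), δ(W_g, W_f)}`. -/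
noncomputable def sbmDist {n : ℕ} (f g : ESp n → ℝ) : ℝ :=
  max (sbmDelta f g) (sbmDelta g f)

lemma stdSymp_smul_left {n : ℕ} (a : ℝ) (z w : ESp n) :
    stdSymp (a • z) w = a * stdSymp z w := by
  simp only [stdSymp, Prod.smul_fst, Prod.smul_snd, Pi.smul_apply, smul_eq_mul,
    Finset.mul_sum]
  exact Finset.sum_congr rfl fun i _ => by ring

lemma stdSymp_smul_right {n : ℕ} (a : ℝ) (z w : ESp n) :
    stdSymp z (a • w) = a * stdSymp z w := by
  simp only [stdSymp, Prod.smul_fst, Prod.smul_snd, Pi.smul_apply, smul_eq_mul,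
    Finset.mul_sum]
  exact Finset.sum_congr rfl fun i _ => by ring

lemma dir_smul {n : ℕ} {s : ℝ} (hs : 0 < s) {x : ESp n} (hx : x ≠ 0) :
    ‖s • x‖⁻¹ • (s • x) = ‖x‖⁻¹ • x := by
  have hxn : ‖x‖ ≠ 0 := norm_ne_zero_iff.mpr hx
  rw [norm_smul, Real.norm_eq_abs, abs_of_pos hs, smul_smul]
  congr 1
  field_simp

lemma smul_mem_starDomInt {n : ℕ} {f : ESp n → ℝ} {s : ℝ} (hs0 : 0 < s) (hs1 : s ≤ 1)
    {x : ESp n} (hx : x ∈ starDomInt f) : s • x ∈ starDomInt f := by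
  rcases hx with h0 | ⟨hne, hlt⟩
  · left; simp [Set.mem_singleton_iff.mp h0]
  · right
    refine ⟨smul_ne_zero (ne_of_gt hs0) hne, ?_⟩
    rw [dir_smul hs0 hne, norm_smul, Real.norm_eq_abs, abs_of_pos hs0]
    calc s * ‖x‖ ≤ 1 * ‖x‖ := by
          apply mul_le_mul_of_nonneg_right hs1 (norm_nonneg x)
      _ = ‖x‖ := one_mul _
      _ < _ := hlt

lemma smul_mem_starDomInt_of_mem {n : ℕ} {f : ESp n → ℝ} {s : ℝ} (hs0 : 0 < s)
    (hs1 : s < 1) {x : ESp n} (hx : x ∈ starDom f) : s • x ∈ starDomInt f := by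
  rcases hx with h0 | ⟨hne, hle⟩
  · left; simp [Set.mem_singleton_iff.mp h0]
  · right
    refine ⟨smul_ne_zero (ne_of_gt hs0) hne, ?_⟩
    rw [dir_smul hs0 hne, norm_smul, Real.norm_eq_abs, abs_of_pos hs0]
    calc s * ‖x‖ < 1 * ‖x‖ := by
          apply mul_lt_mul_of_pos_right hs1 (norm_pos_iff.mpr hne)
      _ = ‖x‖ := one_mul _
      _ ≤ _ := hle

lemma isOpen_starDomInt {n : ℕ} {f : ESp n → ℝ}
    (hf : ContinuousOn f (Metric.sphere (0 : ESp n) 1))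
    (hfpos : ∀ x ∈ Metric.sphere (0 : ESp n) 1, 0 < f x) :
    IsOpen (starDomInt f) := by
  have hdirmem : ∀ x : ESp n, x ≠ 0 → ‖x‖⁻¹ • x ∈ Metric.sphere (0 : ESp n) 1 := by
    intro x hx
    have hxn : ‖x‖ ≠ 0 := norm_ne_zero_iff.mpr hx
    simp [mem_sphere_iff_norm, norm_smul, abs_of_pos (norm_pos_iff.mpr hx),
      inv_mul_cancel₀ hxn]
  have hU : IsOpen {x : ESp n | x ≠ 0} := isOpen_ne
  have hcont : ContinuousOn (fun x : ESp n => f (‖x‖⁻¹ • x) - ‖x‖) {x | x ≠ 0} := by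
    apply ContinuousOn.sub
    · apply hf.comp
      · exact ((continuousOn_id.norm.inv₀ (fun x hx => norm_ne_zero_iff.mpr hx)).smul
          continuousOn_id)
      · intro x hx; exact hdirmem x hx
    · exact continuousOn_id.norm
  have hT : IsOpen ({x : ESp n | x ≠ 0} ∩
      (fun x : ESp n => f (‖x‖⁻¹ • x) - ‖x‖) ⁻¹' Set.Ioi 0) :=
    hcont.isOpen_inter_preimage hU isOpen_Ioi
  rw [Metric.isOpen_iff]
  intro x hx
  rcases hx with h0 | ⟨hne, hlt⟩
  · have hx0 : x = 0 := h0
    by_cases hsph : ∃ y : ESp n, ‖y‖ = 1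
    · have hcpt : IsCompact (Metric.sphere (0 : ESp n) 1) := isCompact_sphere _ _
      obtain ⟨y, hy⟩ := hsph
      have hne' : (Metric.sphere (0 : ESp n) 1).Nonempty :=
        ⟨y, by simpa [mem_sphere_iff_norm] using hy⟩
      obtain ⟨y₀, hy₀, hmin⟩ := hcpt.exists_isMinOn hne' hf
      refine ⟨f y₀, hfpos y₀ hy₀, ?_⟩
      intro z hz
      rcases eq_or_ne z 0 with rfl | hz0
      · left; rfl
      · right
        refine ⟨hz0, ?_⟩
        have h1 : ‖z‖ < f y₀ := by
          simpa [hx0, Metric.mem_ball, dist_zero_right] using hz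
        exact lt_of_lt_of_le h1 (hmin (hdirmem z hz0))
    · refine ⟨1, one_pos, ?_⟩
      intro z _
      rcases eq_or_ne z 0 with rfl | hz0
      · left; rfl
      · exact absurd ⟨‖z‖⁻¹ • z, by
          have := hdirmem z hz0
          simpa [mem_sphere_iff_norm] using this⟩ hsph
  · have hxT : x ∈ {x : ESp n | x ≠ 0} ∩
        (fun x : ESp n => f (‖x‖⁻¹ • x) - ‖x‖) ⁻¹' Set.Ioi 0 :=
      ⟨hne, by simp only [Set.mem_preimage, Set.mem_Ioi]; linarith⟩
    obtain ⟨ε, hε, hball⟩ := Metric.isOpen_iff.mp hT x hxT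
    refine ⟨ε, hε, fun z hz => ?_⟩
    obtain ⟨hz1, hz2⟩ := hball hz
    right
    refine ⟨hz1, ?_⟩
    have : (0:ℝ) < f (‖z‖⁻¹ • z) - ‖z‖ := hz2
    linarith

lemma hasFDerivAt_const_smul' {n : ℕ} (a : ℝ) (x : ESp n) :
    HasFDerivAt (fun y : ESp n => a • y) (a • ContinuousLinearMap.id ℝ (ESp n)) x := by
  exact (a • ContinuousLinearMap.id ℝ (ESp n)).hasFDerivAt (x := x)

lemma hasFDerivAt_of_contDiffOn {n : ℕ} {F : ESp n → ESp n} {U : Set (ESp n)}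
    (h : ContDiffOn ℝ (⊤ : ℕ∞) F U) (hU : IsOpen U) {x : ESp n} (hx : x ∈ U) :
    HasFDerivAt F (fderiv ℝ F x) x :=
  ((h.contDiffAt (hU.mem_nhds hx)).differentiableAt (by simp)).hasFDerivAt

lemma sbm_key {n : ℕ} {f g : ESp n → ℝ}
    (hfop : IsOpen (starDomInt f)) (hgop : IsOpen (starDomInt g))
    {F F' : ESp n → ESp n}
    (hF : IsSymplectomorphism F F' (starDomInt f) (starDomInt g))
    {lam : ℝ} (hlam : 1 < lam) : SBMAdmissible lam f g := by
  obtain ⟨hFs, hF's, hFm, hF'm, hGF, hFG⟩ := hF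
  have hlam0 : (0:ℝ) < lam := lt_trans one_pos hlam
  have hlamne : lam ≠ 0 := ne_of_gt hlam0
  have hinv0 : 0 < lam⁻¹ := inv_pos.mpr hlam0
  have hinv1 : lam⁻¹ < 1 := inv_lt_one_of_one_lt₀ hlam
  have hsub1 : lam⁻¹ • starDom f ⊆ starDomInt f := by
    rintro y ⟨x, hx, rfl⟩
    exact smul_mem_starDomInt_of_mem hinv0 hinv1 hx
  have hmemB : ∀ x ∈ lam • starDomInt g, lam⁻¹ • x ∈ starDomInt g := by
    rintro x ⟨y, hy, rfl⟩
    simpa [smul_smul, inv_mul_cancel₀ hlamne] using hy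
  refine ⟨hlam, starDomInt f, lam • starDomInt g, F,
    fun x => lam • F' (lam⁻¹ • x), hfop, hsub1, hFs, ?_, ?_, hgop.smul₀ hlamne, ?_,
    ⟨?_, ?_⟩, ?_, ?_, ?_⟩
  · -- InjOn F
    intro x hx y hy hxy
    have h := hGF x hx
    rw [hxy, hGF y hy] at h
    exact h.symm
  · rintro _ ⟨x, hx, rfl⟩; exact hFm hx
  · -- starDom g ⊆ lam • starDomInt g
    intro x hx
    refine ⟨lam⁻¹ • x, smul_mem_starDomInt_of_mem hinv0 hinv1 hx, ?_⟩
    simp [smul_smul, mul_inv_cancel₀ hlamne]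
  · -- ContDiffOn ψ
    have h1 : ContDiffOn ℝ (⊤ : ℕ∞) (fun x : ESp n => lam⁻¹ • x) (lam • starDomInt g) :=
      (contDiff_id.const_smul lam⁻¹).contDiffOn
    have h2 : ContDiffOn ℝ (⊤ : ℕ∞) (fun x => F' (lam⁻¹ • x)) (lam • starDomInt g) :=
      hF's.1.comp h1 hmemB
    exact h2.const_smul lam
  · -- symplectic ψ
    intro x hx ζ ζ'
    have hx' : lam⁻¹ • x ∈ starDomInt g := hmemB x hx
    have hD : HasFDerivAt F' (fderiv ℝ F' (lam⁻¹ • x)) (lam⁻¹ • x) :=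
      hasFDerivAt_of_contDiffOn hF's.1 hgop hx'
    have h12 : HasFDerivAt (fun y : ESp n => F' (lam⁻¹ • y))
        ((fderiv ℝ F' (lam⁻¹ • x)).comp (lam⁻¹ • ContinuousLinearMap.id ℝ (ESp n))) x :=
      hD.comp x (hasFDerivAt_const_smul' lam⁻¹ x)
    have hψd : HasFDerivAt (fun x : ESp n => lam • F' (lam⁻¹ • x))
        ((lam • ContinuousLinearMap.id ℝ (ESp n)).comp
          ((fderiv ℝ F' (lam⁻¹ • x)).comp (lam⁻¹ • ContinuousLinearMap.id ℝ (ESp n)))) x :=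
      (hasFDerivAt_const_smul' lam (F' (lam⁻¹ • x))).comp x h12
    rw [hψd.fderiv]
    simp only [ContinuousLinearMap.comp_apply, ContinuousLinearMap.smul_apply,
      ContinuousLinearMap.id_apply]
    rw [stdSymp_smul_left, stdSymp_smul_right, hF's.2 _ hx',
      stdSymp_smul_left, stdSymp_smul_right]
    field_simp
  · -- InjOn ψ
    intro x hx y hy hxy
    have h1 : F' (lam⁻¹ • x) = F' (lam⁻¹ • y) := by
      have := congrArg (fun z : ESp n => lam⁻¹ • z) hxy
      simpa [smul_smul, inv_mul_cancel₀ hlamne] using this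
    have h2 : lam⁻¹ • x = lam⁻¹ • y := by
      have hx' := hFG _ (hmemB x hx)
      rw [h1, hFG _ (hmemB y hy)] at hx'
      exact hx'.symm
    have := congrArg (fun z : ESp n => lam • z) h2
    simpa [smul_smul, mul_inv_cancel₀ hlamne] using this
  · -- image of ψ
    rintro _ ⟨x, hx, rfl⟩
    exact ⟨F' (lam⁻¹ • x), hF'm (hmemB x hx), rfl⟩
  · -- isotopy
    refine ⟨starDomInt f, fun t x => (1 + t*(lam-1)) • F' ((1 + t*(lam-1))⁻¹ • F x),
      hfop, hsub1, ?_, ?_, ?_, ?_⟩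
    · -- joint smoothness
      have hc : ContDiffOn ℝ (⊤ : ℕ∞) (fun p : ℝ × ESp n => 1 + p.1 * (lam - 1))
          (Set.Icc (0:ℝ) 1 ×ˢ starDomInt f) :=
        (contDiff_const.add (contDiff_fst.mul contDiff_const)).contDiffOn
      have hcpos : ∀ p ∈ Set.Icc (0:ℝ) 1 ×ˢ starDomInt f, 1 + p.1 * (lam - 1) ≠ 0 := by
        rintro p ⟨⟨h0, _⟩, _⟩
        nlinarith
      have hFsnd : ContDiffOn ℝ (⊤ : ℕ∞) (fun p : ℝ × ESp n => F p.2)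
          (Set.Icc (0:ℝ) 1 ×ˢ starDomInt f) :=
        hFs.1.comp contDiff_snd.contDiffOn (fun p hp => hp.2)
      have hm : ContDiffOn ℝ (⊤ : ℕ∞)
          (fun p : ℝ × ESp n => ((1 + p.1 * (lam - 1)), (1 + p.1 * (lam - 1))⁻¹ • F p.2))
          (Set.Icc (0:ℝ) 1 ×ˢ starDomInt f) :=
        hc.prodMk ((hc.inv hcpos).smul hFsnd)
      have houter : ContDiffOn ℝ (⊤ : ℕ∞) (fun q : ℝ × ESp n => q.1 • F' q.2)
          ((Set.univ : Set ℝ) ×ˢ starDomInt g) :=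
        contDiff_fst.contDiffOn.smul
          (hF's.1.comp contDiff_snd.contDiffOn (fun q hq => hq.2))
      have hmt : ∀ p ∈ Set.Icc (0:ℝ) 1 ×ˢ starDomInt f,
          ((1 + p.1 * (lam - 1)), (1 + p.1 * (lam - 1))⁻¹ • F p.2) ∈
            (Set.univ : Set ℝ) ×ˢ starDomInt g := by
        rintro p ⟨⟨h0, h1⟩, hx⟩
        have hc1 : (1:ℝ) ≤ 1 + p.1 * (lam - 1) := by nlinarith
        have hc0 : (0:ℝ) < 1 + p.1 * (lam - 1) := by linarith
        exact ⟨trivial, smul_mem_starDomInt (inv_pos.mpr hc0)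
          (inv_le_one_of_one_le₀ hc1) (hFm hx)⟩
      exact houter.comp hm hmt
    · -- each time slice
      intro t ht
      obtain ⟨ht0, ht1⟩ := ht
      have hc1 : (1:ℝ) ≤ 1 + t * (lam - 1) := by nlinarith
      have hc0 : (0:ℝ) < 1 + t * (lam - 1) := by linarith
      have hclam : 1 + t * (lam - 1) ≤ lam := by nlinarith
      set c : ℝ := 1 + t * (lam - 1) with hcdef
      have hcne : c ≠ 0 := ne_of_gt hc0
      have hcinv0 : 0 < c⁻¹ := inv_pos.mpr hc0
      have hcinv1 : c⁻¹ ≤ 1 := inv_le_one_of_one_le₀ hc1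
      have hmaps : ∀ x ∈ starDomInt f, c⁻¹ • F x ∈ starDomInt g :=
        fun x hx => smul_mem_starDomInt hcinv0 hcinv1 (hFm hx)
      refine ⟨⟨?_, ?_⟩, ?_, ?_⟩
      · -- smoothness
        have h1 : ContDiffOn ℝ (⊤ : ℕ∞) (fun x : ESp n => c⁻¹ • F x) (starDomInt f) :=
          hFs.1.const_smul c⁻¹
        have h2 : ContDiffOn ℝ (⊤ : ℕ∞) (fun x => F' (c⁻¹ • F x)) (starDomInt f) :=
          hF's.1.comp h1 hmaps
        exact h2.const_smul c
      · -- symplectic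
        intro x hx ζ ζ'
        have hDF : HasFDerivAt F (fderiv ℝ F x) x :=
          hasFDerivAt_of_contDiffOn hFs.1 hfop hx
        have h2 : HasFDerivAt (fun y : ESp n => c⁻¹ • F y)
            ((c⁻¹ • ContinuousLinearMap.id ℝ (ESp n)).comp (fderiv ℝ F x)) x :=
          (hasFDerivAt_const_smul' c⁻¹ (F x)).comp x hDF
        have hp : c⁻¹ • F x ∈ starDomInt g := hmaps x hx
        have h3 : HasFDerivAt (fun y : ESp n => F' (c⁻¹ • F y))
            ((fderiv ℝ F' (c⁻¹ • F x)).comp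
              ((c⁻¹ • ContinuousLinearMap.id ℝ (ESp n)).comp (fderiv ℝ F x))) x :=
          (hasFDerivAt_of_contDiffOn hF's.1 hgop hp).comp x h2
        have h4 : HasFDerivAt (fun y : ESp n => c • F' (c⁻¹ • F y))
            ((c • ContinuousLinearMap.id ℝ (ESp n)).comp
              ((fderiv ℝ F' (c⁻¹ • F x)).comp
                ((c⁻¹ • ContinuousLinearMap.id ℝ (ESp n)).comp (fderiv ℝ F x)))) x :=
          (hasFDerivAt_const_smul' c (F' (c⁻¹ • F x))).comp x h3
        rw [h4.fderiv]
        simp only [ContinuousLinearMap.comp_apply, ContinuousLinearMap.smul_apply,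
          ContinuousLinearMap.id_apply]
        rw [stdSymp_smul_left, stdSymp_smul_right, hF's.2 _ hp,
          stdSymp_smul_left, stdSymp_smul_right, hFs.2 x hx]
        field_simp
      · -- injective
        intro x hx y hy hxy
        have h1 : F' (c⁻¹ • F x) = F' (c⁻¹ • F y) := by
          have := congrArg (fun z : ESp n => c⁻¹ • z)
            (show c • F' (c⁻¹ • F x) = c • F' (c⁻¹ • F y) from hxy)
          simpa [smul_smul, inv_mul_cancel₀ hcne] using this
        have h2 : c⁻¹ • F x = c⁻¹ • F y := by
          have h := hFG _ (hmaps x hx)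
          rw [h1, hFG _ (hmaps y hy)] at h
          exact h.symm
        have h3 : F x = F y := by
          have := congrArg (fun z : ESp n => c • z) h2
          simpa [smul_smul, mul_inv_cancel₀ hcne] using this
        have h4 := hGF x hx
        rw [h3, hGF y hy] at h4
        exact h4.symm
      · -- image
        rintro _ ⟨x, hx, rfl⟩
        refine ⟨(lam⁻¹ * c) • F' (c⁻¹ • F x), smul_mem_starDomInt
          (by positivity) ?_ (hF'm (hmaps x hx)), ?_⟩
        · rw [← inv_mul_cancel₀ hlamne]
          exact mul_le_mul_of_nonneg_left hclam (le_of_lt hinv0)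
        · show lam • ((lam⁻¹ * c) • F' (c⁻¹ • F x)) = c • F' (c⁻¹ • F x)
          rw [smul_smul, mul_inv_cancel_left₀ hlamne]
    · -- h 0 = id
      intro x hx
      have hx' : x ∈ starDomInt f := hx
      simp only [zero_mul, add_zero, inv_one, one_smul]
      exact hGF x hx'
    · -- h 1 = ψ ∘ φ
      intro x hx
      have hc : (1:ℝ) + 1 * (lam - 1) = lam := by ring
      show (1 + 1 * (lam - 1)) • F' ((1 + 1 * (lam - 1))⁻¹ • F x) = lam • F' (lam⁻¹ • F x)
      rw [hc]

/-- If `W = W_f` and `W' = W_g` are closed star-shaped domains in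
`ℝ^{2n}` determined by continuous positive functions on the unit sphere, and there is a
symplectomorphism `F` (with inverse `F'`) from `int W` onto `int W'`, then every
`lam > 1` is both `(W, W')`-admissible and `(W', W)`-admissible; consequently
`δ(W, W') = δ(W', W) = 0` and `d_SBM(W, W') = 0`. -/
theorem stmt_10 {n : ℕ} (f g : ESp n → ℝ)
    (hf : ContinuousOn f (Metric.sphere (0 : ESp n) 1))
    (hfpos : ∀ x ∈ Metric.sphere (0 : ESp n) 1, 0 < f x)
    (hg : ContinuousOn g (Metric.sphere (0 : ESp n) 1))
    (hgpos : ∀ x ∈ Metric.sphere (0 : ESp n) 1, 0 < g x)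
    (F F' : ESp n → ESp n)
    (hF : IsSymplectomorphism F F' (starDomInt f) (starDomInt g)) :
    (∀ lam : ℝ, 1 < lam → SBMAdmissible lam f g ∧ SBMAdmissible lam g f) ∧
    sbmDelta f g = 0 ∧ sbmDelta g f = 0 ∧ sbmDist f g = 0 := by
  have hfop := isOpen_starDomInt hf hfpos
  have hgop := isOpen_starDomInt hg hgpos
  have hFsymm : IsSymplectomorphism F' F (starDomInt g) (starDomInt f) :=
    ⟨hF.2.1, hF.1, hF.2.2.2.1, hF.2.2.1, hF.2.2.2.2.2, hF.2.2.2.2.1⟩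
  have hadm : ∀ lam : ℝ, 1 < lam → SBMAdmissible lam f g ∧ SBMAdmissible lam g f :=
    fun lam hlam => ⟨sbm_key hfop hgop hF hlam, sbm_key hgop hfop hFsymm hlam⟩
  have hset1 : {lam : ℝ | SBMAdmissible lam f g} = Set.Ioi 1 :=
    Set.ext fun lam => ⟨fun h => h.1, fun h => (hadm lam h).1⟩
  have hset2 : {lam : ℝ | SBMAdmissible lam g f} = Set.Ioi 1 :=
    Set.ext fun lam => ⟨fun h => h.1, fun h => (hadm lam h).2⟩
  have himg : Real.log '' Set.Ioi (1:ℝ) = Set.Ioi 0 := by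
    ext y
    constructor
    · rintro ⟨x, hx, rfl⟩
      exact Real.log_pos hx
    · intro hy
      exact ⟨Real.exp y, lt_of_lt_of_le (by simp at hy; linarith) (Real.add_one_le_exp y),
        Real.log_exp y⟩
  have hd1 : sbmDelta f g = 0 := by rw [sbmDelta, hset1, himg]; exact csInf_Ioi
  have hd2 : sbmDelta g f = 0 := by rw [sbmDelta, hset2, himg]; exact csInf_Ioi
  exact ⟨hadm, hd1, hd2, by rw [sbmDist, hd1, hd2]; simp⟩
end

section
/- Let n ≥ 2, let K be a compact subset of the unit sphere S^{n−1} ⊆ ℝ^n, let U ⊆ S^{n−1} be an open neighborhood of K, and let f : U → ℝ be Lipschitz with 0 < m ≤ f(θ) ≤ M for all θ ∈ U. Fix 0 < a < m and let 𝒞 = {rθ : θ ∈ U, r > a} be the truncated open cone over U. Let F : ℝ^n → ℝ be a continuous function which is convex on 𝒞 and satisfies F(rθ) = r/f(θ) for all θ ∈ U and r > a. Fix a nonnegative integrable δ : ℝ^n → ℝ with ∫δ = 1 and support in the closed unit ball, and for η > 0 set δ_η(x) = η^{−n}δ(x/η) and F_η(x) = ∫_{ℝ^n} F(x − y) δ_η(y)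 dy. Then there exist constants ξ > 0, ρ > 0 and η₀ > 0, depending only on f (through m, M and its Lipschitz constant) and δ, such that for every η ∈ (0, η₀), every θ ∈ K, and all r₀ < r₁ with |r₀ − f(θ)| ≤ ρ and |r₁ − f(θ)| ≤ ρ, one has F_η(r₁θ) − F_η(r₀θ) ≥ ξ(r₁ − r₀). -/
open MeasureTheory

set_option maxHeartbeats 1000000

/-- Lemma 5.4 of the paper: Let `K` be a compact subset of the unit
sphere `S^{n−1} ⊆ ℝ^n` (`n ≥ 2`), `U ⊆ S^{n−1}` a relatively open neighborhood of `K`,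
and `f : U → ℝ` Lipschitz with `0 < m ≤ f ≤ M` on `U`. Fix `0 < a < m`, let
`𝒞 = {rθ : θ ∈ U, r > a}` be the truncated open cone over `U`, and let `F : ℝ^n → ℝ` be
continuous, convex on `𝒞` (along segments contained in `𝒞`), with `F(rθ) = r/f(θ)` for
`θ ∈ U`, `r > a`. Let `δ ≥ 0` be integrable with `∫ δ = 1` and support in the closed
unit ball, and for `η > 0` set `δ_η(x) = η^{-n} δ(x/η)` and
`F_η(x) = ∫ F(x − y) δ_η(y) dy`. Then there are constants `ξ > 0`, `ρ > 0`, `η₀ > 0`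
such that for every `η ∈ (0, η₀)`, every `θ ∈ K`, and all `r₀ < r₁` with
`|r_i − f(θ)| ≤ ρ`, one has `F_η(r₁θ) − F_η(r₀θ) ≥ ξ(r₁ − r₀)`. -/
theorem stmt_14 {n : ℕ} (hn : 2 ≤ n)
    (K U : Set (EuclideanSpace ℝ (Fin n)))
    (hK : IsCompact K) (hKU : K ⊆ U) (hUs : U ⊆ Metric.sphere 0 1)
    (hUopen : ∃ V : Set (EuclideanSpace ℝ (Fin n)),
      IsOpen V ∧ U = V ∩ Metric.sphere 0 1)
    (f : EuclideanSpace ℝ (Fin n) → ℝ) (L : NNReal) (hfL : LipschitzOnWith L f U)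
    (m M : ℝ) (hm : 0 < m) (hfm : ∀ θ ∈ U, m ≤ f θ) (hfM : ∀ θ ∈ U, f θ ≤ M)
    (a : ℝ) (ha0 : 0 < a) (ham : a < m)
    (F : EuclideanSpace ℝ (Fin n) → ℝ) (hFc : Continuous F)
    (hFconv : ∀ x ∈ {x | ∃ θ ∈ U, ∃ r > a, x = r • θ},
      ∀ y ∈ {x | ∃ θ ∈ U, ∃ r > a, x = r • θ}, ∀ t ∈ Set.Icc (0:ℝ) 1,
      t • x + (1 - t) • y ∈ {x | ∃ θ ∈ U, ∃ r > a, x = r • θ} →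
      F (t • x + (1 - t) • y) ≤ t * F x + (1 - t) * F y)
    (hFval : ∀ θ ∈ U, ∀ r > a, F (r • θ) = r / f θ)
    (δ : EuclideanSpace ℝ (Fin n) → ℝ) (hδ0 : ∀ y, 0 ≤ δ y)
    (hδint : Integrable δ) (hδ1 : (∫ y, δ y) = 1)
    (hδsupp : Function.support δ ⊆ Metric.closedBall 0 1) :
    ∃ ξ > (0:ℝ), ∃ ρ > (0:ℝ), ∃ η₀ > (0:ℝ), ∀ η : ℝ, 0 < η → η < η₀ →
      ∀ θ ∈ K, ∀ r₀ r₁ : ℝ, r₀ < r₁ → |r₀ - f θ| ≤ ρ → |r₁ - f θ| ≤ ρ →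
        ξ * (r₁ - r₀) ≤
          (∫ y, F (r₁ • θ - y) * ((η ^ n)⁻¹ * δ (η⁻¹ • y))) -
          (∫ y, F (r₀ • θ - y) * ((η ^ n)⁻¹ * δ (η⁻¹ • y))) := by
  obtain ⟨V, hVopen, hUV⟩ := hUopen
  rcases Set.eq_empty_or_nonempty K with hKe | ⟨θ₀, hθ₀⟩
  · exact ⟨1, one_pos, 1, one_pos, 1, one_pos, fun η _ _ θ hθ => by
      rw [hKe] at hθ; exact (Set.notMem_empty θ hθ).elim⟩
  have hKV : K ⊆ V := fun x hx => (hUV ▸ hKU hx).1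
  obtain ⟨ε, hε, hthick⟩ := hK.exists_thickening_subset_open hVopen hKV
  have hθ₀U := hKU hθ₀
  have hmM : m ≤ M := le_trans (hfm θ₀ hθ₀U) (hfM θ₀ hθ₀U)
  have hM : 0 < M := lt_of_lt_of_le hm hmM
  have hma : 0 < m - a := sub_pos.2 ham
  obtain ⟨c, hc⟩ : ∃ c : ℝ, c = (a + m) / 2 := ⟨_, rfl⟩
  obtain ⟨ρ, hρdef⟩ : ∃ ρ : ℝ, ρ = (m - a) / 4 := ⟨_, rfl⟩
  obtain ⟨C, hCdef⟩ : ∃ C : ℝ, C = 2 * L / a + 1 := ⟨_, rfl⟩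
  have hC : 0 < C := by rw [hCdef]; positivity
  obtain ⟨D, hDdef⟩ : ∃ D : ℝ, D = 2 * M + C * (M + m) := ⟨_, rfl⟩
  have hD : 0 < D := by rw [hDdef, hCdef]; positivity
  obtain ⟨ξ, hξdef⟩ : ∃ ξ : ℝ, ξ = m / (2 * M ^ 2) := ⟨_, rfl⟩
  have hξpos : 0 < ξ := by rw [hξdef]; positivity
  obtain ⟨η₀, hη₀def⟩ : ∃ η₀ : ℝ,
      η₀ = min ((m - a)/4) (min (a * ε / 2) (min (m / (2 * C)) ((m - a) * m / (8 * D)))) :=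
    ⟨_, rfl⟩
  have hη₀ : 0 < η₀ := by
    rw [hη₀def]
    exact lt_min (by positivity) (lt_min (by positivity) (lt_min (by positivity) (by positivity)))
  refine ⟨ξ, hξpos, ρ, by rw [hρdef]; positivity, η₀, hη₀, ?_⟩
  intro η hη hηlt θ hθK r₀ r₁ hr01 hr0 hr1
  rw [hη₀def] at hηlt
  have hη1 : η ≤ (m - a) / 4 := le_of_lt (lt_of_lt_of_le hηlt (min_le_left _ _))
  have hη2 : η < a * ε / 2 := lt_of_lt_of_le hηlt ((min_le_right _ _).trans (min_le_left _ _))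
  have hη3 : η ≤ m / (2 * C) := le_of_lt <| lt_of_lt_of_le hηlt <|
    (min_le_right _ _).trans <| (min_le_right _ _).trans (min_le_left _ _)
  have hη4 : η ≤ (m - a) * m / (8 * D) := le_of_lt <| lt_of_lt_of_le hηlt <|
    (min_le_right _ _).trans <| (min_le_right _ _).trans (min_le_right _ _)
  have hθU : θ ∈ U := hKU hθK
  have hθs : ‖θ‖ = 1 := by
    have := hUs hθU; rwa [mem_sphere_zero_iff_norm] at this
  have hmθ : m ≤ f θ := hfm θ hθU
  have hMθ : f θ ≤ M := hfM θ hθU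
  have habs0 := abs_le.1 hr0
  have habs1 := abs_le.1 hr1
  have hcr0 : c ≤ r₀ := by rw [hc]; linarith [habs0.1]
  -- the basic structure lemma for points r • θ - y with r in the relevant range
  have base : ∀ y : EuclideanSpace ℝ (Fin n), ‖y‖ ≤ η → ∀ r : ℝ, c ≤ r → r ≤ M + ρ →
      ∃ s φv, a < s ∧ φv ∈ U ∧ r • θ - y = s • φv ∧ F (r • θ - y) = s / f φv ∧
        |f φv - f θ| ≤ C * η ∧ |s - r| ≤ η := by
    intro y hy r hcr hrM
    have hca : a < c := by rw [hc]; linarith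
    have hra : a < r := lt_of_lt_of_le hca hcr
    have hr0' : 0 < r := ha0.trans hra
    have hnrθ : ‖r • θ‖ = r := by
      rw [norm_smul, hθs, mul_one, Real.norm_eq_abs, abs_of_pos hr0']
    set z := r • θ - y with hz
    have hsr : |‖z‖ - r| ≤ η := by
      have h1 : |‖z‖ - ‖r • θ‖| ≤ ‖z - r • θ‖ := abs_norm_sub_norm_le _ _
      have h2 : z - r • θ = -y := by rw [hz]; abel
      rw [h2, norm_neg, hnrθ] at h1
      exact h1.trans hy
    have hslb : r - η ≤ ‖z‖ := by have := (abs_le.1 hsr).1; linarith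
    have hsa : a < ‖z‖ := by rw [hc] at hcr; linarith
    have hspos : 0 < ‖z‖ := ha0.trans hsa
    set s := ‖z‖ with hs
    set φv := s⁻¹ • z with hφv
    have hzφ : z = s • φv := by
      rw [hφv, smul_smul, mul_inv_cancel₀ hspos.ne', one_smul]
    have hdiff : φv - θ = s⁻¹ • (z - s • θ) := by
      rw [smul_sub, ← hφv, smul_smul, inv_mul_cancel₀ hspos.ne', one_smul]
    have hznorm : ‖z - s • θ‖ ≤ 2 * η := by
      have h3 : z - s • θ = (r - s) • θ - y := by rw [hz, sub_smul]; abel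
      rw [h3]
      calc ‖(r - s) • θ - y‖ ≤ ‖(r - s) • θ‖ + ‖y‖ := norm_sub_le _ _
        _ ≤ η + η := by
            rw [norm_smul, hθs, mul_one, Real.norm_eq_abs, abs_sub_comm]
            exact add_le_add hsr hy
        _ = 2 * η := by ring
    have hφθ : ‖φv - θ‖ ≤ 2 * η / a := by
      rw [hdiff, norm_smul, Real.norm_eq_abs, abs_of_pos (inv_pos.2 hspos)]
      calc s⁻¹ * ‖z - s • θ‖ ≤ s⁻¹ * (2 * η) :=
            mul_le_mul_of_nonneg_left hznorm (inv_pos.2 hspos).le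
        _ ≤ a⁻¹ * (2 * η) := by gcongr
        _ = 2 * η / a := by ring
    have hφU : φv ∈ U := by
      rw [hUV]
      refine ⟨hthick ?_, ?_⟩
      · rw [Metric.mem_thickening_iff]
        refine ⟨θ, hθK, ?_⟩
        rw [dist_eq_norm]
        calc ‖φv - θ‖ ≤ 2 * η / a := hφθ
          _ < ε := by rw [div_lt_iff₀ ha0]; linarith
      · rw [mem_sphere_zero_iff_norm, hφv, norm_smul, Real.norm_eq_abs,
          abs_of_pos (inv_pos.2 hspos), inv_mul_cancel₀ hspos.ne']
    have hFz : F z = s / f φv := by rw [hzφ]; exact hFval φv hφU s hsa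
    have hfφ : |f φv - f θ| ≤ C * η := by
      have hd := hfL.dist_le_mul φv hφU θ hθU
      rw [Real.dist_eq, dist_eq_norm] at hd
      have h4 : (L : ℝ) * ‖φv - θ‖ ≤ (L : ℝ) * (2 * η / a) :=
        mul_le_mul_of_nonneg_left hφθ L.coe_nonneg
      have h6 : 2 * (L : ℝ) / a * η ≤ C * η := by
        have h7 : 2 * (L : ℝ) / a ≤ C := by rw [hCdef]; linarith
        exact mul_le_mul_of_nonneg_right h7 hη.le
      calc |f φv - f θ| ≤ (L : ℝ) * ‖φv - θ‖ := hd
        _ ≤ (L : ℝ) * (2 * η / a) := h4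
        _ = 2 * (L : ℝ) / a * η := by ring
        _ ≤ C * η := h6
    exact ⟨s, φv, hsa, hφU, hzφ, hFz, hfφ, hsr⟩
  -- pointwise increment bound
  have key : ∀ y : EuclideanSpace ℝ (Fin n), ‖y‖ ≤ η →
      ξ * (r₁ - r₀) ≤ F (r₁ • θ - y) - F (r₀ • θ - y) := by
    intro y hy
    have hcM : c ≤ M + ρ := by rw [hc, hρdef]; linarith
    have hr1M : r₁ ≤ M + ρ := by linarith [habs1.2]
    have hr0M : r₀ ≤ M + ρ := by linarith [habs0.2]
    have hcr1 : c ≤ r₁ := le_trans hcr0 hr01.le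
    obtain ⟨s₁, φ₁, hs₁a, hφ₁U, hz₁, hF₁, hf₁, hsr₁⟩ := base y hy r₁ hcr1 hr1M
    obtain ⟨s₀, φ0, hs₀a, hφ₀U, hz₀, hF₀, hf₀, hsr₀⟩ := base y hy r₀ hcr0 hr0M
    obtain ⟨sc, φc, hsca, hφcU, hzc, hFcv, hfc, hsrc⟩ := base y hy c le_rfl hcM
    have hcr1' : c < r₁ := lt_of_le_of_lt hcr0 hr01
    have hrcne : r₁ - c ≠ 0 := ne_of_gt (sub_pos.2 hcr1')
    obtain ⟨t, htdef⟩ : ∃ t : ℝ, t = (r₀ - c) / (r₁ - c) := ⟨_, rfl⟩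
    have htmem : t ∈ Set.Icc (0:ℝ) 1 := by
      rw [htdef]
      constructor
      · apply div_nonneg <;> linarith
      · rw [div_le_one (by linarith)]; linarith
    have hcomb : t • (r₁ • θ - y) + (1 - t) • (c • θ - y) = r₀ • θ - y := by
      have h1 : t * r₁ + (1 - t) * c = r₀ := by
        rw [htdef]; field_simp; ring
      have h2 : t • (r₁ • θ - y) + (1 - t) • (c • θ - y)
          = (t * r₁ + (1 - t) * c) • θ - (t + (1 - t)) • y := by
        simp only [smul_sub, smul_smul, add_smul, sub_smul, one_smul]
        abel
      rw [h2, h1, show t + (1 - t) = (1:ℝ) by ring, one_smul]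
    have hmem1 : r₁ • θ - y ∈ {x | ∃ θ ∈ U, ∃ r > a, x = r • θ} :=
      ⟨φ₁, hφ₁U, s₁, hs₁a, hz₁⟩
    have hmemc : c • θ - y ∈ {x | ∃ θ ∈ U, ∃ r > a, x = r • θ} :=
      ⟨φc, hφcU, sc, hsca, hzc⟩
    have hmem0 : r₀ • θ - y ∈ {x | ∃ θ ∈ U, ∃ r > a, x = r • θ} :=
      ⟨φ0, hφ₀U, s₀, hs₀a, hz₀⟩
    have hconv := hFconv _ hmem1 _ hmemc t htmem (by rw [hcomb]; exact hmem0)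
    rw [hcomb] at hconv
    have hmφ1 : m ≤ f φ₁ := hfm _ hφ₁U
    have hmφc : m ≤ f φc := hfm _ hφcU
    have hCη : C * η ≤ m / 2 := by
      calc C * η ≤ C * (m / (2 * C)) := mul_le_mul_of_nonneg_left hη3 hC.le
        _ = m / 2 := by field_simp
    have hCηnn : 0 ≤ C * η := mul_nonneg hC.le hη.le
    have hp : 0 < f θ + C * η := by linarith
    have hq : 0 < f θ - C * η := by linarith
    have e1 : (r₁ - η) / (f θ + C * η) ≤ s₁ / f φ₁ := by
      apply div_le_div₀ (by linarith : (0:ℝ) ≤ s₁) ?_ (lt_of_lt_of_le hm hmφ1) ?_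
      · linarith [(abs_le.1 hsr₁).1]
      · linarith [(abs_le.1 hf₁).2]
    have e2 : sc / f φc ≤ (c + η) / (f θ - C * η) := by
      apply div_le_div₀ (by rw [hc]; linarith : (0:ℝ) ≤ c + η) ?_ hq ?_
      · linarith [(abs_le.1 hsrc).2]
      · linarith [(abs_le.1 hfc).1]
    have hk0 : (m - a)/4 ≤ r₁ - c := by rw [hc]; linarith [habs1.1]
    have hslope : ξ * (r₁ - c) ≤ F (r₁ • θ - y) - F (c • θ - y) := by
      rw [hF₁, hFcv]
      have main : ξ * (r₁ - c) ≤ (r₁ - η) / (f θ + C * η) - (c + η) / (f θ - C * η) := by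
        rw [div_sub_div _ _ hp.ne' hq.ne', le_div_iff₀ (mul_pos hp hq)]
        have hk1 : ξ * (r₁ - c) * ((f θ + C * η) * (f θ - C * η)) ≤ (r₁ - c) * m / 2 := by
          have hsq : (f θ + C * η) * (f θ - C * η) ≤ M ^ 2 := by
            have h8 : (f θ + C * η) * (f θ - C * η) = f θ ^ 2 - (C * η) ^ 2 := by ring
            have h9 : f θ ^ 2 ≤ M ^ 2 :=
              pow_le_pow_left₀ (by linarith only [hm, hmθ]) hMθ 2
            have h10 := sq_nonneg (C * η)
            linarith only [h8, h9, h10]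
          calc ξ * (r₁ - c) * ((f θ + C * η) * (f θ - C * η))
              ≤ ξ * (r₁ - c) * M ^ 2 := by
                apply mul_le_mul_of_nonneg_left hsq
                apply mul_nonneg hξpos.le; linarith
            _ = (r₁ - c) * m / 2 := by rw [hξdef]; field_simp
        have hk2 : (r₁ - c) * m / 2 ≤ (r₁ - η) * (f θ - C * η) - (c + η) * (f θ + C * η) := by
          have hDb : 2 * f θ + C * (r₁ + c) ≤ D := by
            have hrc : r₁ + c ≤ M + m := by linarith [habs1.2, hc, hρdef]
            have h7 : C * (r₁ + c) ≤ C * (M + m) := mul_le_mul_of_nonneg_left hrc hC.le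
            rw [hDdef]; linarith
          have hηD : η * D ≤ (m - a) * m / 8 := by
            rw [le_div_iff₀ (by positivity : (0:ℝ) < 8 * D)] at hη4
            linarith
          have h5 : η * (2 * f θ + C * (r₁ + c)) ≤ η * D :=
            mul_le_mul_of_nonneg_left hDb hη.le
          have hA : ((m - a) / 4) * m ≤ (r₁ - c) * m :=
            mul_le_mul_of_nonneg_right hk0 hm.le
          have hB : (r₁ - c) * m ≤ (r₁ - c) * f θ :=
            mul_le_mul_of_nonneg_left hmθ (by linarith only [hk0, hma] : (0:ℝ) ≤ r₁ - c)
          have hexp : (r₁ - η) * (f θ - C * η) - (c + η) * (f θ + C * η)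
              = (r₁ - c) * f θ - η * (2 * f θ + C * (r₁ + c)) := by ring
          rw [hexp]
          linarith only [hA, hB, h5, hηD]
        linarith
      linarith
    have h1tn : 0 ≤ 1 - t := by linarith [htmem.2]
    have h1t : (1 - t) * (r₁ - c) = r₁ - r₀ := by
      rw [htdef]; field_simp; ring
    have step := mul_le_mul_of_nonneg_left hslope h1tn
    calc ξ * (r₁ - r₀) = (1 - t) * (ξ * (r₁ - c)) := by rw [← h1t]; ring
      _ ≤ (1 - t) * (F (r₁ • θ - y) - F (c • θ - y)) := step
      _ = F (r₁ • θ - y) - (t * F (r₁ • θ - y) + (1 - t) * F (c • θ - y)) := by ring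
      _ ≤ F (r₁ • θ - y) - F (r₀ • θ - y) := by linarith
  -- integral part
  set w : EuclideanSpace ℝ (Fin n) → ℝ := fun y => (η ^ n)⁻¹ * δ (η⁻¹ • y) with hwdef
  have hηn : (0:ℝ) < η ^ n := by positivity
  have hδη : Integrable (fun y : EuclideanSpace ℝ (Fin n) => δ (η⁻¹ • y)) :=
    hδint.comp_smul (inv_ne_zero hη.ne')
  have hwint : Integrable w := hδη.const_mul _
  have hw0 : ∀ y, 0 ≤ w y := fun y => mul_nonneg (inv_nonneg.2 hηn.le) (hδ0 _)
  have hwsupp : ∀ y, w y ≠ 0 → ‖y‖ ≤ η := by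
    intro y hwy
    have hδy : δ (η⁻¹ • y) ≠ 0 := by
      intro h0; apply hwy; rw [hwdef]; simp [h0]
    have hmem := hδsupp hδy
    rw [Metric.mem_closedBall, dist_zero_right, norm_smul, Real.norm_eq_abs,
      abs_of_pos (inv_pos.2 hη)] at hmem
    calc ‖y‖ = η * (η⁻¹ * ‖y‖) := by field_simp
      _ ≤ η * 1 := mul_le_mul_of_nonneg_left hmem hη.le
      _ = η := mul_one η
  have hwint1 : (∫ y, w y) = 1 := by
    have h1 : (∫ y, δ (η⁻¹ • y)) = η ^ n * ∫ y, δ y := by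
      rw [Measure.integral_comp_inv_smul volume δ η, finrank_euclideanSpace_fin,
        abs_of_pos hηn, smul_eq_mul]
    rw [hwdef]
    simp only
    rw [integral_const_mul, h1, hδ1, mul_one, inv_mul_cancel₀ hηn.ne']
  have hint : ∀ x : EuclideanSpace ℝ (Fin n), Integrable (fun y => F (x - y) * w y) := by
    intro x
    obtain ⟨B, hB⟩ := (isCompact_closedBall x η).exists_bound_of_continuousOn hFc.continuousOn
    refine Integrable.mono' (hwint.const_mul B) ?_ ?_
    · exact (hFc.comp (continuous_const.sub continuous_id)).aestronglyMeasurable.mul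
        hwint.aestronglyMeasurable
    · filter_upwards with y
      by_cases hwy : w y = 0
      · simp [hwy]
      · have hyη := hwsupp y hwy
        have hxy : x - y ∈ Metric.closedBall x η := by
          rw [Metric.mem_closedBall, dist_eq_norm]
          simpa using hyη
        rw [norm_mul, Real.norm_eq_abs (w y), abs_of_nonneg (hw0 y)]
        exact mul_le_mul_of_nonneg_right (hB _ hxy) (hw0 y)
  have hI1 := hint (r₁ • θ)
  have hI0 := hint (r₀ • θ)
  have hintdiff : Integrable (fun y => (F (r₁ • θ - y) - F (r₀ • θ - y)) * w y) := by
    have heq : (fun y => (F (r₁ • θ - y) - F (r₀ • θ - y)) * w y)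
        = fun y => F (r₁ • θ - y) * w y - F (r₀ • θ - y) * w y := by
      funext y; ring
    rw [heq]; exact hI1.sub hI0
  have hmono : (∫ y, ξ * (r₁ - r₀) * w y) ≤ ∫ y, (F (r₁ • θ - y) - F (r₀ • θ - y)) * w y := by
    apply integral_mono (hwint.const_mul _) hintdiff
    intro y
    by_cases hwy : w y = 0
    · simp [hwy]
    · exact mul_le_mul_of_nonneg_right (key y (hwsupp y hwy)) (hw0 y)
  have hconst : (∫ y, ξ * (r₁ - r₀) * w y) = ξ * (r₁ - r₀) := by
    rw [integral_const_mul, hwint1, mul_one]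
  have hsplit : (∫ y, (F (r₁ • θ - y) - F (r₀ • θ - y)) * w y)
      = (∫ y, F (r₁ • θ - y) * w y) - ∫ y, F (r₀ • θ - y) * w y := by
    simp_rw [sub_mul]; exact integral_sub hI1 hI0
  calc ξ * (r₁ - r₀) = ∫ y, ξ * (r₁ - r₀) * w y := hconst.symm
    _ ≤ ∫ y, (F (r₁ • θ - y) - F (r₀ • θ - y)) * w y := hmono
    _ = (∫ y, F (r₁ • θ - y) * w y) - ∫ y, F (r₀ • θ - y) * w y := hsplit
end
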